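/- Let C be a TDD respecting a vtree T over a finite variable set X, and let g1, g1' be twin t1-nodes of C for some non-root node t1 of T. Then the circuit obtained from C by the twin contraction of g1 and g1' is again a TDD respecting T, and it computes the same Boolean function as C. -/

import Mathlib

/-- A vtree: a rooted binary tree whose leaves are labeled by variables. -/
inductive Vtree (V : Type) where
  | leaf : V → Vtree V
  | node : Vtree V → Vtree V → Vtree V

namespace Vtree

variable {V : Type} [DecidableEq V]

/-- The set of variables labeling the leaves of a vtree. -/
def vars : Vtree V → Finset V
  | leaf x => {x}
  | node l r => l.vars ∪ r.vars

/-- A vtree is proper when its leaves carry pairwise distinct variables,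
so that the leaves are in one-to-one correspondence with `vars`. -/
def Proper : Vtree V → Prop
  | leaf _ => True
  | node l r => l.Proper ∧ r.Proper ∧ Disjoint l.vars r.vars

/-- `T.IsNode t` : `t` is (the subtree rooted at) a node of `T`. -/
def IsNode : Vtree V → Vtree V → Prop
  | leaf x, t => t = leaf x
  | node l r, t => t = node l r ∨ l.IsNode t ∨ r.IsNode t

/-- Remove every leaf whose variable is in `Y`, suppressing unary nodes.
Returns `none` if no leaf survives. -/
def restrict (Y : Finset V) : Vtree V → Option (Vtree V)
  | leaf x => if x ∈ Y then none else some (leaf x)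
  | node l r =>
    match l.restrict Y, r.restrict Y with
    | none, o => o
    | some l', none => some l'
    | some l', some r' => some (node l' r')

/-- The vtree `T ∖ x`. -/
def remove (x : V) (T : Vtree V) : Option (Vtree V) := T.restrict {x}

/-- A vtree is linear when every internal node has a leaf child. -/
def Linear : Vtree V → Prop
  | leaf _ => True
  | node l r => ((∃ x, l = leaf x) ∨ (∃ x, r = leaf x)) ∧ l.Linear ∧ r.Linear

/-- The variable order induced by a linear vtree. -/
def order : Vtree V → List V
  | leaf x => [x]
  | node (leaf x) r => x :: r.order
  | node l (leaf x) => x :: l.order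
  | node l r => l.order ++ r.order

end Vtree

/-- Labels of leaf-layer nodes of a TDD: the positive literal, the negative
literal, and the constants 1 and 0. -/
inductive TLab where
  | pos | neg | one | zero
deriving DecidableEq

/-- Disjunction of two leaf labels (used when contracting twin leaf nodes). -/
def TLab.lor : TLab → TLab → TLab
  | .zero, a => a
  | a, .zero => a
  | .one, _ => .one
  | _, .one => .one
  | .pos, .pos => .pos
  | .neg, .neg => .neg
  | .pos, .neg => .one
  | .neg, .pos => .one

/-- A (non-deterministic) tree decision diagram structured along a vtree:
one layer of nodes (identified by natural numbers) per vtree node; leaf-layer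
nodes carry labels, internal-layer nodes carry their sets of input pairs. -/
inductive NTDD (V : Type) where
  | leaf (x : V) (ns : Finset ℕ) (lab : ℕ → TLab)
  | node (l r : NTDD V) (ns : Finset ℕ) (E : ℕ → Finset (ℕ × ℕ))

namespace NTDD

variable {V : Type}

/-- The vtree that an nTDD is structured along. -/
def shape : NTDD V → Vtree V
  | leaf x _ _ => .leaf x
  | node l r _ _ => .node l.shape r.shape

/-- The set of nodes of the top (root) layer. -/
def nodes : NTDD V → Finset ℕ
  | leaf _ ns _ => ns
  | node _ _ ns _ => ns

/-- The size of an nTDD: the total number of input pairs. -/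
def size : NTDD V → ℕ
  | leaf _ _ _ => 0
  | node l r ns E => l.size + r.size + ∑ g ∈ ns, (E g).card

/-- The width of an nTDD: the maximal cardinality of a layer. -/
def width : NTDD V → ℕ
  | leaf _ ns _ => ns.card
  | node l r ns _ => max ns.card (max l.width r.width)

/-- `C.sat g τ` : (the restriction of) the assignment `τ` is a model of the
function `f_g` computed by the top-layer node `g` of `C`. -/
def sat : NTDD V → ℕ → (V → Bool) → Prop
  | leaf x _ lab, g, τ =>
    match lab g with
    | .pos => τ x = true
    | .neg => τ x = false
    | .one => True
    | .zero => False
  | node l r _ E, g, τ => ∃ p ∈ E g, l.sat p.1 τ ∧ r.sat p.2 τ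

/-- Well-formedness: input pairs of top-layer nodes reference nodes of the
children layers. -/
def WF : NTDD V → Prop
  | leaf _ _ _ => True
  | node l r ns E => l.WF ∧ r.WF ∧ ∀ g ∈ ns, ∀ p ∈ E g, p.1 ∈ l.nodes ∧ p.2 ∈ r.nodes

/-- Determinism, turning an nTDD into a TDD: at each leaf layer at most one
node labeled by each of `x`, `¬x`, `1`, and if a node is labeled `1` then all
other nodes are labeled `0`; at each internal layer every pair is the input of
at most one node. -/
def Det : NTDD V → Prop
  | leaf _ ns lab =>
      (∀ g ∈ ns, ∀ g' ∈ ns, lab g = TLab.pos → lab g' = TLab.pos → g = g') ∧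
      (∀ g ∈ ns, ∀ g' ∈ ns, lab g = TLab.neg → lab g' = TLab.neg → g = g') ∧
      (∀ g ∈ ns, ∀ g' ∈ ns, lab g = TLab.one → lab g' = TLab.one → g = g') ∧
      (∀ g ∈ ns, lab g = TLab.one → ∀ g' ∈ ns, g' ≠ g → lab g' = TLab.zero)
  | node l r ns E => l.Det ∧ r.Det ∧ ∀ g ∈ ns, ∀ g' ∈ ns, g ≠ g' → Disjoint (E g) (E g')

/-- `C.Subdiagram D` : `D` is the sub-diagram of `C` sitting at some node of
the underlying vtree (including `C` itself). -/
def Subdiagram : NTDD V → NTDD V → Prop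
  | leaf x ns lab, D => D = leaf x ns lab
  | node l r ns E, D => D = node l r ns E ∨ l.Subdiagram D ∨ r.Subdiagram D

/-- A TDD is full if, at every layer, every assignment is a model of some node
of that layer. -/
def Full (C : NTDD V) : Prop :=
  ∀ D : NTDD V, C.Subdiagram D → ∀ τ : V → Bool, ∃ g ∈ D.nodes, D.sat g τ

end NTDD

/-- A choice of one node id per vtree node, mirroring the vtree: the data of a
certificate. -/
inductive IdTree where
  | leaf (g : ℕ)
  | node (g : ℕ) (l r : IdTree)

/-- The id chosen at the root. -/
def IdTree.root : IdTree → ℕ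
  | .leaf g => g
  | .node g _ _ => g

namespace NTDD

variable {V : Type}

/-- `C.IsCert P τ` : the choice `P` of one node per layer is a certificate for
`τ` in `C` (except for the root condition `P.root = out`, stated separately):
at a leaf labeled `x` the chosen node is labeled `1` or by a literal satisfied
by `τ`, and at an internal node the chosen pair of children nodes is an input
of the chosen node. -/
def IsCert : NTDD V → IdTree → (V → Bool) → Prop
  | leaf x ns lab, IdTree.leaf g, τ =>
      g ∈ ns ∧ (lab g = TLab.one ∨ (lab g = TLab.pos ∧ τ x = true) ∨
        (lab g = TLab.neg ∧ τ x = false))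
  | node l r ns E, IdTree.node g pl pr, τ =>
      g ∈ ns ∧ (pl.root, pr.root) ∈ E g ∧ l.IsCert pl τ ∧ r.IsCert pr τ
  | _, _, _ => False

/-- `SubPair C P D Q` : `D` is the sub-diagram of `C` at some vtree node `t`,
and `Q` is the corresponding part of the certificate data `P` (so `Q.root` is
the node that `P` chooses at `t`). -/
def SubPair : NTDD V → IdTree → NTDD V → IdTree → Prop
  | leaf x ns lab, P, D, Q => D = leaf x ns lab ∧ Q = P
  | node l r ns E, P, D, Q =>
      (D = node l r ns E ∧ Q = P) ∨
      (match P with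
       | IdTree.node _ pl pr => l.SubPair pl D Q ∨ r.SubPair pr D Q
       | _ => False)

/-- Contract the two top-layer nodes `g1, g1'` into the fresh node `v`. -/
def contractLayer (g1 g1' v : ℕ) : NTDD V → NTDD V
  | leaf x ns lab =>
      leaf x (insert v ((ns.erase g1).erase g1'))
        (fun g => if g = v then (lab g1).lor (lab g1') else lab g)
  | node l r ns E =>
      node l r (insert v ((ns.erase g1).erase g1'))
        (fun g => if g = v then E g1 ∪ E g1' else E g)

/-- Twin contraction of nodes `g1, g1'` of the left child layer into `v`:
they are merged in the left layer, and every input pair `(g1, g2)` or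
`(g1', g2)` of a top-layer node is replaced by `(v, g2)`. -/
def contractAtL (g1 g1' v : ℕ) : NTDD V → NTDD V
  | node l r ns E =>
      node (l.contractLayer g1 g1' v) r ns
        (fun g => (E g).image (fun p => if p.1 = g1 ∨ p.1 = g1' then (v, p.2) else p))
  | C => C

/-- Twin contraction of nodes `g1, g1'` of the right child layer into `v`. -/
def contractAtR (g1 g1' v : ℕ) : NTDD V → NTDD V
  | node l r ns E =>
      node l (r.contractLayer g1 g1' v) ns
        (fun g => (E g).image (fun p => if p.2 = g1 ∨ p.2 = g1' then (p.1, v) else p))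
  | C => C

open Classical in
/-- Replace the sub-diagram `D` of `C` by `D'` (in a proper vtree, sub-diagrams
at distinct positions are distinct, so this is unambiguous). -/
noncomputable def replace : NTDD V → NTDD V → NTDD V → NTDD V
  | leaf x ns lab, D, D' => if leaf x ns lab = D then D' else leaf x ns lab
  | node l r ns E, D, D' =>
      if node l r ns E = D then D'
      else node (l.replace D D') (r.replace D D') ns E

/-- `g1` and `g1'` are twins of the left child layer: they have the same
siblings with respect to every top-layer node. -/
def TwinsL (g1 g1' : ℕ) : NTDD V → Prop
  | node l _ ns E => g1 ∈ l.nodes ∧ g1' ∈ l.nodes ∧ g1 ≠ g1' ∧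
      ∀ g ∈ ns, ∀ g2 : ℕ, ((g1, g2) ∈ E g ↔ (g1', g2) ∈ E g)
  | _ => False

/-- `g1` and `g1'` are twins of the right child layer. -/
def TwinsR (g1 g1' : ℕ) : NTDD V → Prop
  | node _ r ns E => g1 ∈ r.nodes ∧ g1' ∈ r.nodes ∧ g1 ≠ g1' ∧
      ∀ g ∈ ns, ∀ g2 : ℕ, ((g2, g1) ∈ E g ↔ (g2, g1') ∈ E g)
  | _ => False

/-- The node set of the left child layer. -/
def leftNodes : NTDD V → Finset ℕ
  | node l _ _ _ => l.nodes
  | _ => ∅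

/-- The node set of the right child layer. -/
def rightNodes : NTDD V → Finset ℕ
  | node _ r _ _ => r.nodes
  | _ => ∅

end NTDD

/-- The number of distinct non-trivial `Y`-subfunctions of the Boolean
function `f` : functions of the form `σ ↦ f (Y.piecewise τ σ)` for some
`τ`, having at least one model. -/
noncomputable def subCount {V : Type} [DecidableEq V] (f : (V → Bool) → Prop) (Y : Finset V) : ℕ :=
  Nat.card {h : (V → Bool) → Prop |
    (∃ τ : V → Bool, h = fun σ => f (Y.piecewise τ σ)) ∧ ∃ σ : V → Bool, h σ}

/-- The number of distinct `Y`-subfunctions of `f` (trivial ones included). -/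
noncomputable def subCountAll {V : Type} [DecidableEq V] (f : (V → Bool) → Prop) (Y : Finset V) : ℕ :=
  Nat.card {h : (V → Bool) → Prop |
    ∃ τ : V → Bool, h = fun σ => f (Y.piecewise τ σ)}

/-!
Every layer of a TDD carries a pairwise disjoint family of finite sets: the input pairs of the
nodes at an internal layer, and at a leaf layer the values of `x` satisfying the labels (the four
leaf conditions of determinism say exactly this). Merging `g1, g1'` into `v`, with the union of
their sets, keeps the family pairwise disjoint, and `v` computes `f_{g1} ∨ f_{g1'}`.
At the parent layer, twins have the same siblings, so the pairs `(g1, g2)` and `(g1', g2)` are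
inputs of the same node `g`; redirecting both to `(v, g2)` therefore keeps the input sets
disjoint and does not change `f_g`. Nodes further up are untouched and see children computing
the same functions. The right-child case is the mirror image of the left-child case.
-/

namespace TLab

def models : TLab → Finset Bool
  | pos => {true}
  | neg => {false}
  | one => Finset.univ
  | zero => ∅

theorem models_lor (a b : TLab) : (a.lor b).models = a.models ∪ b.models := by
  cases a <;> cases b <;> decide

end TLab

theorem Set.PairwiseDisjoint.merge {ι α : Type*} [DecidableEq ι] [DecidableEq α] {s : Finset ι}
    {f : ι → Finset α} (hs : (s : Set ι).PairwiseDisjoint f) {g1 g1' : ι} (h1 : g1 ∈ s)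
    (h1' : g1' ∈ s) (v : ι) :
    (↑(insert v ((s.erase g1).erase g1')) : Set ι).PairwiseDisjoint
      (fun g => if g = v then f g1 ∪ f g1' else f g) := by
  have mem : ∀ {g}, g ∈ (↑(insert v ((s.erase g1).erase g1')) : Set ι) → g ≠ v →
      g ∈ s ∧ g ≠ g1 ∧ g ≠ g1' := by
    intro g hg hgv
    simp_all
  have merged : ∀ {g}, g ∈ s ∧ g ≠ g1 ∧ g ≠ g1' → Disjoint (f g1 ∪ f g1') (f g) :=
    fun ⟨hg, h, h'⟩ =>
      Finset.disjoint_union_left.2 ⟨hs h1 hg (Ne.symm h), hs h1' hg (Ne.symm h')⟩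
  intro a ha b hb hab
  by_cases hav : a = v <;> by_cases hbv : b = v <;>
    simp only [Function.onFun, hav, hbv, if_true, if_false]
  · exact absurd (hav.trans hbv.symm) hab
  · exact merged (mem hb hbv)
  · exact (merged (mem ha hav)).symm
  · exact hs (mem ha hav).1 (mem hb hbv).1 hab

section contractFst

variable {α β : Type*} [DecidableEq α] [DecidableEq β] {S : Finset (α × β)} {g1 g1' v : α}

theorem Finset.mem_image_contractFst_iff (htwin : ∀ g2, (g1, g2) ∈ S ↔ (g1', g2) ∈ S)
    (hv : ∀ p ∈ S, p.1 ≠ v) (q : α × β) :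
    q ∈ S.image (fun p => if p.1 = g1 ∨ p.1 = g1' then (v, p.2) else p) ↔
      if q.1 = v then (g1, q.2) ∈ S else q ∈ S ∧ q.1 ≠ g1 ∧ q.1 ≠ g1' := by
  constructor
  · rw [Finset.mem_image]
    rintro ⟨⟨a, b⟩, hp, rfl⟩
    by_cases hc : a = g1 ∨ a = g1'
    · rcases hc with rfl | rfl
      · simpa using hp
      · simpa using (htwin b).2 hp
    · simp only [if_neg hc, hv _ hp, if_false]
      exact ⟨hp, not_or.1 hc⟩
  · split_ifs with hq
    · exact fun h => Finset.mem_image.2 ⟨_, h, by simp [← hq]⟩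
    · exact fun ⟨h, h1, h1'⟩ => Finset.mem_image.2 ⟨q, h, by simp [h1, h1']⟩

theorem Finset.exists_mem_image_contractFst_iff
    (htwin : ∀ g2, (g1, g2) ∈ S ↔ (g1', g2) ∈ S) (hv : ∀ p ∈ S, p.1 ≠ v)
    (P : α → Prop) (Q : β → Prop) :
    (∃ q ∈ S.image (fun p => if p.1 = g1 ∨ p.1 = g1' then (v, p.2) else p),
        (if q.1 = v then P g1 ∨ P g1' else P q.1) ∧ Q q.2) ↔
      ∃ p ∈ S, P p.1 ∧ Q p.2 := by
  simp only [Finset.mem_image_contractFst_iff htwin hv]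
  constructor
  · rintro ⟨⟨a, b⟩, hq, hP, hQ⟩
    split_ifs at hq hP
    · rcases hP with hP | hP
      exacts [⟨_, hq, hP, hQ⟩, ⟨_, (htwin b).1 hq, hP, hQ⟩]
    · exact ⟨_, hq.1, hP, hQ⟩
  · rintro ⟨⟨a, b⟩, hp, hP, hQ⟩
    by_cases hc : a = g1 ∨ a = g1'
    · refine ⟨(v, b), ?_, ?_, hQ⟩ <;> rcases hc with rfl | rfl <;> simp [hp, hP, htwin]
    · exact ⟨(a, b), by simpa [hv _ hp] using ⟨hp, not_or.1 hc⟩, by simpa [hv _ hp], hQ⟩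

end contractFst

namespace NTDD

variable {V : Type}

theorem sat_leaf {x : V} {ns : Finset ℕ} {lab : ℕ → TLab} {g : ℕ} {τ : V → Bool} :
    (leaf x ns lab).sat g τ ↔ τ x ∈ (lab g).models := by
  cases h : lab g <;> simp [sat, h, TLab.models]

theorem det_leaf_iff {x : V} {ns : Finset ℕ} {lab : ℕ → TLab} :
    (leaf x ns lab).Det ↔ (ns : Set ℕ).PairwiseDisjoint (TLab.models ∘ lab) := by
  constructor
  · rintro ⟨hpos, hneg, hone, hzero⟩ g hg g' hg' hne
    cases ha : lab g <;> cases hb : lab g' <;> simp [Function.onFun, ha, hb, TLab.models]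
    all_goals first
      | exact hne (hpos g hg g' hg' ha hb)
      | exact hne (hneg g hg g' hg' ha hb)
      | exact hne (hone g hg g' hg' ha hb)
      | simpa [hb] using hzero g hg ha g' hg' (Ne.symm hne)
      | simpa [ha] using hzero g' hg' hb g hg hne
  · intro h
    refine ⟨?_, ?_, ?_, fun g hg ha g' hg' hne => ?_⟩
    iterate 3
      intro g hg g' hg' ha hb
      by_contra hne
      simpa [Function.onFun, ha, hb, TLab.models] using h hg hg' hne
    have := h hg hg' hne.symm
    cases hb : lab g' <;> simp_all [Function.onFun, TLab.models]

section contractLayer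

variable (g1 g1' v : ℕ) (C : NTDD V)

theorem shape_contractLayer : (C.contractLayer g1 g1' v).shape = C.shape := by
  cases C <;> rfl

theorem nodes_contractLayer :
    (C.contractLayer g1 g1' v).nodes = insert v ((C.nodes.erase g1).erase g1') := by
  cases C <;> rfl

theorem sat_contractLayer (g : ℕ) (τ : V → Bool) :
    (C.contractLayer g1 g1' v).sat g τ ↔
      if g = v then C.sat g1 τ ∨ C.sat g1' τ else C.sat g τ := by
  cases C with
  | leaf => split_ifs <;> simp [contractLayer, sat_leaf, TLab.models_lor, *]
  | node => split_ifs <;> simp [contractLayer, sat, or_and_right, exists_or, *]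

variable {g1 g1' C}

theorem WF.contractLayer (hC : C.WF) (h1 : g1 ∈ C.nodes) (h1' : g1' ∈ C.nodes) :
    (C.contractLayer g1 g1' v).WF := by
  cases C with
  | leaf => trivial
  | node l r ns E =>
    obtain ⟨hl, hr, hE⟩ := hC
    refine ⟨hl, hr, fun g hg p hp => ?_⟩
    dsimp only at hp
    split_ifs at hp
    · rcases Finset.mem_union.1 hp with hp | hp
      exacts [hE g1 h1 p hp, hE g1' h1' p hp]
    · exact hE g (Finset.mem_of_mem_erase (Finset.mem_of_mem_erase
        ((Finset.mem_insert.1 hg).resolve_left ‹_›))) p hp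

theorem Det.contractLayer (hC : C.Det) (h1 : g1 ∈ C.nodes) (h1' : g1' ∈ C.nodes) :
    (C.contractLayer g1 g1' v).Det := by
  cases C with
  | leaf x ns lab =>
    rw [det_leaf_iff] at hC
    rw [NTDD.contractLayer, det_leaf_iff]
    convert hC.merge h1 h1' v using 2 with g
    by_cases g = v <;> simp [TLab.models_lor, *]
  | node l r ns E =>
    exact ⟨hC.1, hC.2.1, Set.PairwiseDisjoint.merge hC.2.2 h1 h1' v⟩

end contractLayer

structure IsFaithfulReplacement (D D' : NTDD V) : Prop where
  shape_eq : D'.shape = D.shape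
  nodes_eq : D'.nodes = D.nodes
  wf : D'.WF
  det : D'.Det
  sat_iff : ∀ g ∈ D.nodes, ∀ τ, D'.sat g τ ↔ D.sat g τ

theorem isFaithfulReplacement_refl {C : NTDD V} (hWF : C.WF) (hDet : C.Det) :
    C.IsFaithfulReplacement C :=
  ⟨rfl, rfl, hWF, hDet, fun _ _ _ => Iff.rfl⟩

theorem IsFaithfulReplacement.node {l r l' r' : NTDD V} {ns : Finset ℕ}
    {E : ℕ → Finset (ℕ × ℕ)} (hl : l.IsFaithfulReplacement l')
    (hr : r.IsFaithfulReplacement r')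
    (hWF : (node l r ns E).WF) (hDet : (node l r ns E).Det) :
    (node l r ns E).IsFaithfulReplacement (node l' r' ns E) := by
  refine ⟨by simp [shape, hl.shape_eq, hr.shape_eq], rfl, ⟨hl.wf, hr.wf, ?_⟩,
    ⟨hl.det, hr.det, hDet.2.2⟩, fun g hg τ => ?_⟩
  · simpa [hl.nodes_eq, hr.nodes_eq] using hWF.2.2
  · refine exists_congr fun p => and_congr_right fun hp => ?_
    exact and_congr (hl.sat_iff _ (hWF.2.2 g hg p hp).1 τ) (hr.sat_iff _ (hWF.2.2 g hg p hp).2 τ)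

theorem isFaithfulReplacement_replace {D D' : NTDD V}
    (h : D.WF → D.Det → D.IsFaithfulReplacement D') {C : NTDD V} (hWF : C.WF) (hDet : C.Det) :
    C.IsFaithfulReplacement (C.replace D D') := by
  induction C with
  | leaf x ns lab =>
    rw [replace]
    split_ifs with he
    · subst he
      exact h hWF hDet
    · exact isFaithfulReplacement_refl hWF hDet
  | node l r ns E ihl ihr =>
    rw [replace]
    split_ifs with he
    · subst he
      exact h hWF hDet
    · exact (ihl hWF.1 hDet.1).node (ihr hWF.2.1 hDet.2.1) hWF hDet

theorem isFaithfulReplacement_contractAtL {D : NTDD V} {g1 g1' v : ℕ} (htw : D.TwinsL g1 g1')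
    (hv : v ∉ D.leftNodes) (hWF : D.WF) (hDet : D.Det) :
    D.IsFaithfulReplacement (D.contractAtL g1 g1' v) := by
  cases D with
  | leaf => exact htw.elim
  | node l r ns E =>
    obtain ⟨h1, h1', -, htwin⟩ := htw
    obtain ⟨hWl, hWr, hWE⟩ := hWF
    have hvl : v ∉ l.nodes := hv
    have hfresh : ∀ g ∈ ns, ∀ p ∈ E g, p.1 ≠ v := fun g hg p hp hpv =>
      hvl (hpv ▸ (hWE g hg p hp).1)
    have mem := fun g hg => Finset.mem_image_contractFst_iff (htwin g hg) (hfresh g hg)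
    refine ⟨by simp [contractAtL, shape, shape_contractLayer], rfl, ?_, ?_, fun g hg τ => ?_⟩
    · refine ⟨hWl.contractLayer v h1 h1', hWr, fun g hg q hq => ?_⟩
      rw [mem g hg] at hq
      rw [nodes_contractLayer]
      split_ifs at hq with hqv
      · exact ⟨by simp [hqv], (hWE g hg _ hq).2⟩
      · exact ⟨by simp [hq.2, (hWE g hg q hq.1).1], (hWE g hg q hq.1).2⟩
    · refine ⟨hDet.1.contractLayer v h1 h1', hDet.2.1, fun g hg g' hg' hne => ?_⟩
      refine Finset.disjoint_left.2 fun q hq hq' => ?_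
      rw [mem g hg] at hq
      rw [mem g' hg'] at hq'
      have hdisj := Finset.disjoint_left.1 (hDet.2.2 g hg g' hg' hne)
      split_ifs at hq hq'
      exacts [hdisj hq hq', hdisj hq.1 hq'.1]
    · simp only [contractAtL, sat, sat_contractLayer]
      exact Finset.exists_mem_image_contractFst_iff (htwin g hg) (hfresh g hg)
        (l.sat · τ) (r.sat · τ)

def swapChildren : NTDD V → NTDD V
  | node l r ns E => node r l ns (fun g => (E g).image Prod.swap)
  | C => C

@[simp]
theorem swapChildren_swapChildren (C : NTDD V) : C.swapChildren.swapChildren = C := by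
  cases C <;> simp [swapChildren, Finset.image_image]

@[simp]
theorem nodes_swapChildren (C : NTDD V) : C.swapChildren.nodes = C.nodes := by
  cases C <;> rfl

@[simp]
theorem leftNodes_swapChildren (C : NTDD V) : C.swapChildren.leftNodes = C.rightNodes := by
  cases C <;> rfl

theorem sat_swapChildren (C : NTDD V) (g : ℕ) (τ : V → Bool) :
    C.swapChildren.sat g τ ↔ C.sat g τ := by
  cases C with
  | leaf => rfl
  | node =>
    simp only [NTDD.swapChildren, sat, Finset.exists_mem_image, Prod.fst_swap, Prod.snd_swap]
    exact exists_congr fun _ => and_congr_right fun _ => and_comm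

theorem WF.swapChildren {C : NTDD V} (h : C.WF) : C.swapChildren.WF := by
  cases C with
  | leaf => trivial
  | node l r ns E =>
    refine ⟨h.2.1, h.1, fun g hg q hq => ?_⟩
    obtain ⟨p, hp, rfl⟩ := Finset.mem_image.1 hq
    exact (h.2.2 g hg p hp).symm

theorem Det.swapChildren {C : NTDD V} (h : C.Det) : C.swapChildren.Det := by
  cases C with
  | leaf => exact h
  | node l r ns E =>
    exact ⟨h.2.1, h.1, fun g hg g' hg' hne =>
      (Finset.disjoint_image Prod.swap_injective).2 (h.2.2 g hg g' hg' hne)⟩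

theorem TwinsR.swapChildren {C : NTDD V} {g1 g1' : ℕ} (h : C.TwinsR g1 g1') :
    C.swapChildren.TwinsL g1 g1' := by
  cases C with
  | leaf => exact h.elim
  | node l r ns E =>
    obtain ⟨h1, h1', hne, htwin⟩ := h
    exact ⟨h1, h1', hne, fun g hg g2 => by simpa using htwin g hg g2⟩

theorem contractAtR_eq_swapChildren (C : NTDD V) (g1 g1' v : ℕ) :
    C.contractAtR g1 g1' v = (C.swapChildren.contractAtL g1 g1' v).swapChildren := by
  cases C with
  | leaf => rfl
  | node l r ns E =>
    simp only [contractAtR, swapChildren, contractAtL, Finset.image_image]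
    congr 2 with g : 1
    congr 1 with p : 1
    by_cases h : p.2 = g1 ∨ p.2 = g1' <;> simp [h]

theorem IsFaithfulReplacement.swapChildren {D D' : NTDD V} (h : D.IsFaithfulReplacement D') :
    D.swapChildren.IsFaithfulReplacement D'.swapChildren := by
  refine ⟨?_, by simpa using h.nodes_eq, h.wf.swapChildren, h.det.swapChildren, ?_⟩
  · have := h.shape_eq
    cases D <;> cases D' <;> simp_all [NTDD.swapChildren, shape]
  · simpa [sat_swapChildren] using h.sat_iff

theorem isFaithfulReplacement_contractAtR {D : NTDD V} {g1 g1' v : ℕ} (htw : D.TwinsR g1 g1')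
    (hv : v ∉ D.rightNodes) (hWF : D.WF) (hDet : D.Det) :
    D.IsFaithfulReplacement (D.contractAtR g1 g1' v) := by
  have := (isFaithfulReplacement_contractAtL htw.swapChildren (by simpa using hv)
    hWF.swapChildren hDet.swapChildren).swapChildren
  rwa [swapChildren_swapChildren, ← contractAtR_eq_swapChildren] at this

end NTDD

theorem stmt8_general {V : Type} (T : Vtree V)
    (C : NTDD V) (out : ℕ) (hsh : C.shape = T) (hWF : C.WF) (hDet : C.Det)
    (hout : out ∈ C.nodes)
    (D : NTDD V) (g1 g1' v : ℕ) :
    (D.TwinsL g1 g1' → v ∉ D.leftNodes →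
      (C.replace D (D.contractAtL g1 g1' v)).shape = T ∧
      (C.replace D (D.contractAtL g1 g1' v)).WF ∧
      (C.replace D (D.contractAtL g1 g1' v)).Det ∧
      out ∈ (C.replace D (D.contractAtL g1 g1' v)).nodes ∧
      (∀ τ : V → Bool,
        ((C.replace D (D.contractAtL g1 g1' v)).sat out τ ↔ C.sat out τ))) ∧
    (D.TwinsR g1 g1' → v ∉ D.rightNodes →
      (C.replace D (D.contractAtR g1 g1' v)).shape = T ∧
      (C.replace D (D.contractAtR g1 g1' v)).WF ∧
      (C.replace D (D.contractAtR g1 g1' v)).Det ∧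
      out ∈ (C.replace D (D.contractAtR g1 g1' v)).nodes ∧
      (∀ τ : V → Bool,
        ((C.replace D (D.contractAtR g1 g1' v)).sat out τ ↔ C.sat out τ))) := by
  have conclude : ∀ D' : NTDD V, (D.WF → D.Det → D.IsFaithfulReplacement D') →
      (C.replace D D').shape = T ∧ (C.replace D D').WF ∧ (C.replace D D').Det ∧
        out ∈ (C.replace D D').nodes ∧ ∀ τ, ((C.replace D D').sat out τ ↔ C.sat out τ) :=
    fun D' hD' =>
      have hC := NTDD.isFaithfulReplacement_replace hD' hWF hDet
      ⟨hC.shape_eq.trans hsh, hC.wf, hC.det, hC.nodes_eq ▸ hout, hC.sat_iff out hout⟩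
  exact ⟨fun htw hv => conclude _ (NTDD.isFaithfulReplacement_contractAtL htw hv),
    fun htw hv => conclude _ (NTDD.isFaithfulReplacement_contractAtR htw hv)⟩

/-- Twin contraction: let `C` be a TDD respecting a vtree
`T` over a finite variable set `X`, let `D` be the sub-diagram of `C` at an
internal node `t` of `T` (so that the child layers of `D` sit at non-root
nodes `t1` of `T`), and let `g1, g1'` be twin nodes of a child layer of `D`
and `v` a fresh node id. Then the circuit obtained from `C` by the twin
contraction of `g1` and `g1'` is again a TDD respecting `T` computing the
same Boolean function as `C`. Both the left-child and the right-child cases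
are stated. -/
theorem stmt8 {V : Type} [DecidableEq V] (X : Finset V) (T : Vtree V)
    (hTp : T.Proper) (hTX : T.vars = X)
    (C : NTDD V) (out : ℕ) (hsh : C.shape = T) (hWF : C.WF) (hDet : C.Det)
    (hout : out ∈ C.nodes)
    (D : NTDD V) (hD : C.Subdiagram D) (g1 g1' v : ℕ) :
    (D.TwinsL g1 g1' → v ∉ D.leftNodes →
      (C.replace D (D.contractAtL g1 g1' v)).shape = T ∧
      (C.replace D (D.contractAtL g1 g1' v)).WF ∧
      (C.replace D (D.contractAtL g1 g1' v)).Det ∧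
      out ∈ (C.replace D (D.contractAtL g1 g1' v)).nodes ∧
      (∀ τ : V → Bool,
        ((C.replace D (D.contractAtL g1 g1' v)).sat out τ ↔ C.sat out τ))) ∧
    (D.TwinsR g1 g1' → v ∉ D.rightNodes →
      (C.replace D (D.contractAtR g1 g1' v)).shape = T ∧
      (C.replace D (D.contractAtR g1 g1' v)).WF ∧
      (C.replace D (D.contractAtR g1 g1' v)).Det ∧
      out ∈ (C.replace D (D.contractAtR g1 g1' v)).nodes ∧
      (∀ τ : V → Bool,
        ((C.replace D (D.contractAtR g1 g1' v)).sat out τ ↔ C.sat out τ))) :=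
  stmt8_general T C out hsh hWF hDet hout D g1 g1' v
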